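/- arXiv:1503.01600 — 4 statements merged into one kernel-verified Lean document; each statement's English description precedes it below -/
import Mathlib

section
/- For all real x ≥ 1 and λ > 0, one has 1 - e^{-λx} - λx e^{-λx} ≤ x²(1 - e^{-λ} - λ e^{-λ}). -/
/-! Write `F t = 1 - e^{-t} - t e^{-t}`, so that `F' t = t e^{-t}`. The function
`g y = y² F λ - F (λ y)` vanishes at `y = 1` and has derivative `y (2 F λ - λ² e^{-λ y})`,
which is nonnegative for `y ≥ 1` because `λ² e^{-λ y} ≤ λ² e^{-λ} ≤ 2 F λ`; the last inequality
is `1 + λ + λ²/2 ≤ e^λ`. Hence `g` is nondecreasing on `[1, ∞)`. -/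

open Real Set

lemma hasDerivAt_one_sub_exp_neg_sub_mul_exp_neg (t : ℝ) :
    HasDerivAt (fun t => 1 - exp (-t) - t * exp (-t)) (t * exp (-t)) t := by
  have he : HasDerivAt (fun t => exp (-t)) (-exp (-t)) t := by
    simpa using (hasDerivAt_neg t).exp
  exact (((hasDerivAt_const t 1).sub he).sub ((hasDerivAt_id' t).mul he)).congr_deriv (by ring)

lemma sq_mul_exp_neg_le {t : ℝ} (ht : 0 ≤ t) :
    t ^ 2 * exp (-t) ≤ 2 * (1 - exp (-t) - t * exp (-t)) := by
  have h := mul_le_mul_of_nonneg_right (quadratic_le_exp_of_nonneg ht) (exp_pos (-t)).le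
  rw [← exp_add, add_neg_cancel, exp_zero] at h
  linarith

theorem stmt1 (x l : ℝ) (hx : 1 ≤ x) (hl : 0 < l) :
    1 - Real.exp (-(l * x)) - l * x * Real.exp (-(l * x)) ≤
      x ^ 2 * (1 - Real.exp (-l) - l * Real.exp (-l)) := by
  set F : ℝ → ℝ := fun t => 1 - exp (-t) - t * exp (-t)
  change F (l * x) ≤ x ^ 2 * F l
  set g : ℝ → ℝ := fun y => y ^ 2 * F l - F (l * y)
  have hg : ∀ y, HasDerivAt g (y * (2 * F l - l ^ 2 * exp (-(l * y)))) y := fun y => by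
    refine (((hasDerivAt_pow 2 y).mul_const (F l)).sub
      ((hasDerivAt_one_sub_exp_neg_sub_mul_exp_neg (l * y)).comp y
        ((hasDerivAt_id' y).const_mul l))).congr_deriv ?_
    simp only [F, mul_one]
    ring
  have hmono : MonotoneOn g (Ici 1) := by
    refine monotoneOn_of_hasDerivWithinAt_nonneg (convex_Ici 1)
      (fun y _ => (hg y).continuousAt.continuousWithinAt) (fun y _ => (hg y).hasDerivWithinAt)
      fun y hy => ?_
    rw [interior_Ici, mem_Ioi] at hy
    have hdecay : l ^ 2 * exp (-(l * y)) ≤ l ^ 2 * exp (-l) := by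
      gcongr
      nlinarith
    exact mul_nonneg (by linarith) (by linarith [sq_mul_exp_neg_le hl.le])
  have h := hmono self_mem_Ici hx hx
  simp only [g, one_pow, one_mul, mul_one, sub_self] at h
  linarith
end

section
/- Let φ be a Bernstein function with representation φ(λ) = a + bλ + ∫_{(0,∞)} (1 - e^{-λt}) μ(dt), and define H(λ) := φ(λ) - λφ'(λ). Then H(λx) ≤ x²·H(λ) for all λ > 0 and x ≥ 1. -/
/-!
With `k s = 1 - e^{-s} - s e^{-s}` (`hKernel`), differentiation under the integral sign gives
`H λ = a + ∫ k(λt) μ(dt)`, the drift `b` cancelling. So it suffices that `k (s x) ≤ x² k s` for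
`s ≥ 0`, `x ≥ 1`. Since `k' u = u e^{-u}`, the function `y ↦ y² k s - k (s y)` has derivative
`y (2 k s - s² e^{-s y})` on `[1, ∞)`, which is nonnegative because `s² e^{-s} ≤ 2 k s`
(the inequality `1 + s + s²/2 ≤ e^s`); the function vanishes at `y = 1`.
-/

open MeasureTheory Set Real

noncomputable def hKernel (s : ℝ) : ℝ := 1 - exp (-s) - s * exp (-s)

theorem hasDerivAt_hKernel (u : ℝ) : HasDerivAt hKernel (u * exp (-u)) u := by
  have he : HasDerivAt (fun u => exp (-u)) (-exp (-u)) u := by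
    simpa using (hasDerivAt_neg u).exp
  exact (((hasDerivAt_const u 1).sub he).sub ((hasDerivAt_id' u).mul he)).congr_deriv (by ring)

theorem sq_mul_exp_neg_le_two_mul_hKernel {s : ℝ} (hs : 0 ≤ s) :
    s ^ 2 * exp (-s) ≤ 2 * hKernel s := by
  have hq : 1 + s + s ^ 2 / 2 ≤ exp s := quadratic_le_exp_of_nonneg hs
  have hinv : exp (-s) * exp s = 1 := by rw [← exp_add, neg_add_cancel, exp_zero]
  unfold hKernel
  nlinarith [exp_pos (-s)]

theorem hKernel_mul_le_sq_mul {s x : ℝ} (hs : 0 ≤ s) (hx : 1 ≤ x) :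
    hKernel (s * x) ≤ x ^ 2 * hKernel s := by
  set g : ℝ → ℝ := fun y => y ^ 2 * hKernel s - hKernel (s * y)
  have hg : ∀ y, HasDerivAt g (y * (2 * hKernel s - s ^ 2 * exp (-(s * y)))) y := by
    intro y
    have hk := (hasDerivAt_hKernel (s * y)).comp y ((hasDerivAt_id y).const_mul s)
    exact (((hasDerivAt_pow 2 y).mul_const (hKernel s)).sub hk).congr_deriv (by ring)
  have hmono : MonotoneOn g (Ici 1) := by
    refine monotoneOn_of_deriv_nonneg (convex_Ici 1)
      (fun y _ => (hg y).continuousAt.continuousWithinAt)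
      (fun y _ => (hg y).differentiableAt.differentiableWithinAt) fun y hy => ?_
    rw [interior_Ici, mem_Ioi] at hy
    have hdecay : s ^ 2 * exp (-(s * y)) ≤ s ^ 2 * exp (-s) := by
      gcongr
      nlinarith
    rw [(hg y).deriv]
    nlinarith [sq_mul_exp_neg_le_two_mul_hKernel hs]
  have h := hmono self_mem_Ici hx hx
  simp only [g, one_pow, one_mul, mul_one, sub_self] at h
  linarith

theorem integrableOn_min_one_of_lintegral_lt_top {μ : Measure ℝ}
    (hμ : ∫⁻ t in Ioi (0:ℝ), ENNReal.ofReal (min 1 t) ∂μ < ⊤) :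
    IntegrableOn (fun t => min 1 t) (Ioi 0) μ := by
  refine ⟨(continuous_const.min continuous_id).aestronglyMeasurable, ?_⟩
  rw [hasFiniteIntegral_iff_ofReal]
  · exact hμ
  · filter_upwards [ae_restrict_mem measurableSet_Ioi] with t ht
    exact le_min zero_le_one (le_of_lt ht)

theorem integrableOn_Ioi_of_norm_le {μ : Measure ℝ}
    (hμ : IntegrableOn (fun t => min 1 t) (Ioi 0) μ) {f : ℝ → ℝ} (hf : Continuous f) {C : ℝ}
    (hC : ∀ t > 0, ‖f t‖ ≤ C) (hCt : ∀ t > 0, ‖f t‖ ≤ C * t) :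
    IntegrableOn f (Ioi 0) μ := by
  refine Integrable.mono' (hμ.const_mul C) hf.aestronglyMeasurable ?_
  filter_upwards [ae_restrict_mem measurableSet_Ioi] with t ht
  have hC0 : 0 ≤ C := (norm_nonneg _).trans (hC t ht)
  rw [mul_min_of_nonneg _ _ hC0, mul_one]
  exact le_min (hC t ht) (hCt t ht)

theorem integrableOn_one_sub_exp_neg_mul {μ : Measure ℝ}
    (hμ : IntegrableOn (fun t => min 1 t) (Ioi 0) μ) {c : ℝ} (hc : 0 ≤ c) :
    IntegrableOn (fun t => 1 - exp (-(c * t))) (Ioi 0) μ := by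
  refine integrableOn_Ioi_of_norm_le hμ (by fun_prop) (C := max 1 c) (fun t ht => ?_) fun t ht => ?_
  all_goals
    have hct : 0 ≤ c * t := mul_nonneg hc (le_of_lt ht)
    rw [norm_of_nonneg (sub_nonneg.2 (exp_le_one_iff.2 (neg_nonpos.2 hct)))]
  · linarith [exp_pos (-(c * t)), le_max_left 1 c]
  · nlinarith [add_one_le_exp (-(c * t)), le_max_right 1 c, (le_of_lt ht : (0:ℝ) ≤ t)]

theorem integrableOn_mul_exp_neg_mul {μ : Measure ℝ}
    (hμ : IntegrableOn (fun t => min 1 t) (Ioi 0) μ) {c : ℝ} (hc : 0 < c) :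
    IntegrableOn (fun t => t * exp (-(c * t))) (Ioi 0) μ := by
  refine integrableOn_Ioi_of_norm_le hμ (by fun_prop) (C := max c⁻¹ 1) (fun t ht => ?_) fun t ht => ?_
  all_goals
    have ht0 : 0 ≤ t := le_of_lt ht
    rw [norm_of_nonneg (by positivity)]
  · have hinv : exp (-(c * t)) * exp (c * t) = 1 := by rw [← exp_add, neg_add_cancel, exp_zero]
    have hle : c * (t * exp (-(c * t))) ≤ 1 := by
      nlinarith [add_one_le_exp (c * t), exp_pos (-(c * t))]
    calc t * exp (-(c * t)) ≤ c⁻¹ := by rw [inv_eq_one_div, le_div_iff₀ hc]; linarith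
      _ ≤ max c⁻¹ 1 := le_max_left _ _
  · have he : exp (-(c * t)) ≤ 1 := exp_le_one_iff.2 (by nlinarith)
    nlinarith [le_max_right c⁻¹ 1]

theorem integrableOn_hKernel_mul {μ : Measure ℝ}
    (hμ : IntegrableOn (fun t => min 1 t) (Ioi 0) μ) {c : ℝ} (hc : 0 < c) :
    IntegrableOn (fun t => hKernel (c * t)) (Ioi 0) μ := by
  have h := (integrableOn_one_sub_exp_neg_mul hμ hc.le).sub
    ((integrableOn_mul_exp_neg_mul hμ hc).const_mul c)
  refine h.congr_fun (fun t _ => ?_) measurableSet_Ioi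
  simp only [Pi.sub_apply, hKernel]
  ring

theorem hasDerivAt_integral_one_sub_exp_neg_mul {μ : Measure ℝ}
    (hμ : IntegrableOn (fun t => min 1 t) (Ioi 0) μ) {l : ℝ} (hl : 0 < l) :
    HasDerivAt (fun x => ∫ t in Ioi 0, (1 - exp (-(x * t))) ∂μ)
      (∫ t in Ioi 0, t * exp (-(l * t)) ∂μ) l := by
  refine (hasDerivAt_integral_of_dominated_loc_of_deriv_le (F' := fun x t => t * exp (-(x * t)))
    (Metric.ball_mem_nhds l (half_pos hl))
    (.of_forall fun x => (by fun_prop : Continuous fun t => 1 - exp (-(x * t))).aestronglyMeasurable)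
    (integrableOn_one_sub_exp_neg_mul hμ hl.le)
    (by fun_prop : Continuous fun t => t * exp (-(l * t))).aestronglyMeasurable
    ?_ (integrableOn_mul_exp_neg_mul hμ (half_pos hl)) ?_).2
  · filter_upwards [ae_restrict_mem measurableSet_Ioi] with t ht x hx
    have ht0 : 0 ≤ t := le_of_lt ht
    have hlx : l / 2 ≤ x := by
      rw [Metric.mem_ball, dist_eq] at hx
      linarith [(abs_lt.1 hx).1]
    rw [norm_of_nonneg (by positivity)]
    gcongr
  · refine .of_forall fun t x _ => ?_
    have h := ((hasDerivAt_mul_const (x := x) t).fun_neg.exp).const_sub 1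
    exact h.congr_deriv (by ring)

theorem sub_mul_deriv_eq_add_integral_hKernel {μ : Measure ℝ}
    (hμ : IntegrableOn (fun t => min 1 t) (Ioi 0) μ) {a b : ℝ} {φ : ℝ → ℝ}
    (hφ : ∀ l > 0, φ l = a + b * l + ∫ t in Ioi (0:ℝ), (1 - exp (-(l * t))) ∂μ)
    {l : ℝ} (hl : 0 < l) :
    φ l - l * deriv φ l = a + ∫ t in Ioi 0, hKernel (l * t) ∂μ := by
  have hderiv : deriv φ l = b + ∫ t in Ioi 0, t * exp (-(l * t)) ∂μ := by
    have hφ_nhds : φ =ᶠ[nhds l] fun y => a + b * y + ∫ t in Ioi 0, (1 - exp (-(y * t))) ∂μ := by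
      filter_upwards [Ioi_mem_nhds hl] using hφ
    rw [hφ_nhds.deriv_eq]
    refine HasDerivAt.deriv ?_
    exact (((hasDerivAt_id' l).const_mul b).const_add a).add
      (hasDerivAt_integral_one_sub_exp_neg_mul hμ hl) |>.congr_deriv (by ring)
  have hsplit : ∫ t in Ioi 0, hKernel (l * t) ∂μ
      = (∫ t in Ioi 0, (1 - exp (-(l * t))) ∂μ) - l * ∫ t in Ioi 0, t * exp (-(l * t)) ∂μ := by
    rw [← integral_const_mul, ← integral_sub (integrableOn_one_sub_exp_neg_mul hμ hl.le)
      ((integrableOn_mul_exp_neg_mul hμ hl).const_mul l)]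
    simp only [hKernel, mul_assoc]
  rw [hφ l hl, hderiv, hsplit]
  ring

theorem stmt3_general (μ : Measure ℝ)
    (hμ : ∫⁻ t in Ioi (0:ℝ), ENNReal.ofReal (min 1 t) ∂μ < ⊤)
    (a b : ℝ) (ha : 0 ≤ a)
    (φ H : ℝ → ℝ)
    (hφ : ∀ l > 0, φ l = a + b * l + ∫ t in Ioi (0:ℝ), (1 - exp (-(l * t))) ∂μ)
    (hH : ∀ l > 0, H l = φ l - l * deriv φ l) :
    ∀ l > 0, ∀ x ≥ 1, H (l * x) ≤ x ^ 2 * H l := by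
  have hμ' := integrableOn_min_one_of_lintegral_lt_top hμ
  intro l hl x hx
  have hlx : 0 < l * x := by positivity
  rw [hH _ hlx, hH l hl, sub_mul_deriv_eq_add_integral_hKernel hμ' hφ hlx,
    sub_mul_deriv_eq_add_integral_hKernel hμ' hφ hl]
  have hint : ∫ t in Ioi 0, hKernel (l * x * t) ∂μ ≤ x ^ 2 * ∫ t in Ioi 0, hKernel (l * t) ∂μ := by
    rw [← integral_const_mul]
    refine setIntegral_mono_on (integrableOn_hKernel_mul hμ' hlx)
      ((integrableOn_hKernel_mul hμ' hl).const_mul _) measurableSet_Ioi fun t ht => ?_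
    rw [mul_right_comm]
    exact hKernel_mul_le_sq_mul (mul_pos hl ht).le hx
  have ha' : a ≤ x ^ 2 * a := le_mul_of_one_le_left ha (one_le_pow₀ hx)
  linarith

theorem stmt3 (μ : Measure ℝ)
    (hμ : ∫⁻ t in Ioi (0:ℝ), ENNReal.ofReal (min 1 t) ∂μ < ⊤)
    (a b : ℝ) (ha : 0 ≤ a) (hb : 0 ≤ b)
    (φ H : ℝ → ℝ)
    (hφ : ∀ l > 0, φ l = a + b * l + ∫ t in Ioi (0:ℝ), (1 - exp (-(l * t))) ∂μ)
    (hH : ∀ l > 0, H l = φ l - l * deriv φ l) :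
    ∀ l > 0, ∀ x ≥ 1, H (l * x) ≤ x ^ 2 * H l :=
  stmt3_general μ hμ a b ha φ H hφ hH
end

section
/- Let μ be the Lévy measure of a subordinator with H(λ) = φ(λ) - λφ'(λ). Suppose H satisfies the upper scaling condition: there exist C_U > 0, 0 < δ < 2, λ_U ≥ 0 with H(λx) ≤ C_U x^δ H(λ) for all λ > λ_U, x ≥ 1. Then there exists M ∈ (0,1) such that μ(r,∞) ≥ (M²/2)·H(r^{-1}) for all 0 < r < M·λ_U^{-1}. -/
/-! With `g(s) = kernelH s = 1 - (1 + s) e^{-s} = ∫₀ˢ u e^{-u} du`, the drift cancels in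
`φ(λ) - λ φ'(λ)` and `H(λ) = ∫ g(λ t) μ(dt)`. Since `s² / (2e) ≤ g(s) ≤ s² / 2` on `[0, 1]` and
`g ≤ 1`, splitting the integral at `t = r` gives `H(M / r) ≤ e M² H(1 / r) + μ(r, ∞)`, while the
upper scaling condition with `x = 1 / M` gives `M^δ H(1 / r) ≤ C_U H(M / r)`. Once `M` is so small
that `e C_U M^{2-δ} ≤ 1/2`, the `H(1 / r)` terms can be absorbed, leaving
`M² H(1 / r) / 2 ≤ μ(r, ∞)`. -/

open MeasureTheory Set Real Filter Topology

noncomputable def kernelH (s : ℝ) : ℝ := 1 - (1 + s) * exp (-s)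

lemma kernelH_nonneg (s : ℝ) : 0 ≤ kernelH s := by
  have h : (1 + s) * exp (-s) ≤ exp s * exp (-s) :=
    mul_le_mul_of_nonneg_right (by linarith [add_one_le_exp s]) (exp_pos _).le
  rw [← exp_add, add_neg_cancel, exp_zero] at h
  unfold kernelH
  linarith

lemma kernelH_le_one {s : ℝ} (hs : 0 ≤ s) : kernelH s ≤ 1 := by
  unfold kernelH
  nlinarith [exp_pos (-s)]

lemma hasDerivAt_kernelH (x : ℝ) : HasDerivAt kernelH (x * exp (-x)) x := by
  have h := (((hasDerivAt_id x).const_add 1).mul (hasDerivAt_neg x).exp).const_sub 1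
  exact h.congr_deriv (by simp; ring)

lemma kernelH_eq_integral (s : ℝ) : kernelH s = ∫ u in (0)..s, u * exp (-u) := by
  rw [intervalIntegral.integral_eq_sub_of_hasDerivAt (fun x _ => hasDerivAt_kernelH x)
    (Continuous.intervalIntegrable (by fun_prop) _ _)]
  simp [kernelH]

lemma kernelH_le_sq_div_two {s : ℝ} (hs : 0 ≤ s) : kernelH s ≤ s ^ 2 / 2 := by
  rw [kernelH_eq_integral]
  calc ∫ u in (0)..s, u * exp (-u)
      ≤ ∫ u in (0)..s, u :=
        intervalIntegral.integral_mono_on hs (Continuous.intervalIntegrable (by fun_prop) _ _)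
          (Continuous.intervalIntegrable (by fun_prop) _ _) fun u hu =>
            mul_le_of_le_one_right hu.1 (exp_le_one_iff.2 (by linarith [hu.1]))
    _ = s ^ 2 / 2 := by simp [integral_id]

lemma exp_neg_one_mul_sq_div_two_le_kernelH {s : ℝ} (hs0 : 0 ≤ s) (hs1 : s ≤ 1) :
    exp (-1) * (s ^ 2 / 2) ≤ kernelH s := by
  rw [kernelH_eq_integral]
  calc exp (-1) * (s ^ 2 / 2) = ∫ u in (0)..s, u * exp (-1) := by
        simp [intervalIntegral.integral_mul_const, integral_id, mul_comm]
    _ ≤ ∫ u in (0)..s, u * exp (-u) :=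
        intervalIntegral.integral_mono_on hs0 (Continuous.intervalIntegrable (by fun_prop) _ _)
          (Continuous.intervalIntegrable (by fun_prop) _ _) fun u hu =>
            mul_le_mul_of_nonneg_left (exp_le_exp.2 (by linarith [hu.2])) hu.1

lemma kernelH_mul_le {a s : ℝ} (ha : 0 ≤ a) (hs0 : 0 ≤ s) (hs1 : s ≤ 1) :
    kernelH (a * s) ≤ exp 1 * a ^ 2 * kernelH s :=
  calc kernelH (a * s) ≤ (a * s) ^ 2 / 2 := kernelH_le_sq_div_two (mul_nonneg ha hs0)
    _ = exp 1 * a ^ 2 * (exp (-1) * (s ^ 2 / 2)) := by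
        rw [← mul_assoc, mul_right_comm _ _ (exp (-1)), ← exp_add]; simp; ring
    _ ≤ exp 1 * a ^ 2 * kernelH s :=
        mul_le_mul_of_nonneg_left (exp_neg_one_mul_sq_div_two_le_kernelH hs0 hs1) (by positivity)

lemma exists_pos_lt_one_mul_rpow_le (C : ℝ) {p ε : ℝ} (hp : 0 < p) (hε : 0 < ε) :
    ∃ M, 0 < M ∧ M < 1 ∧ C * M ^ p ≤ ε := by
  have hlim : Tendsto (fun M : ℝ => C * M ^ p) (𝓝[>] 0) (𝓝 0) := by
    simpa [zero_rpow hp.ne'] using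
      (((continuousAt_rpow_const 0 p (Or.inr hp.le)).tendsto).const_mul C).mono_left
        nhdsWithin_le_nhds
  have hIoo : ∀ᶠ M in 𝓝[>] (0 : ℝ), M ∈ Ioo 0 1 := Ioo_mem_nhdsGT one_pos
  obtain ⟨M, hMε, hM0, hM1⟩ := ((hlim.eventually_lt_const hε).and hIoo).exists
  exact ⟨M, hM0, hM1, hMε.le⟩

lemma one_sub_exp_neg_mul_le {l t : ℝ} (ht : 0 ≤ t) :
    1 - exp (-(l * t)) ≤ max 1 l * min 1 t := by
  rcases le_total t 1 with h | h
  · rw [min_eq_right h]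
    nlinarith [add_one_le_exp (-(l * t)), le_max_right 1 l]
  · rw [min_eq_left h, mul_one]
    linarith [exp_pos (-(l * t)), le_max_left 1 l]

lemma mul_exp_neg_mul_le {l t : ℝ} (hl : 0 < l) (ht : 0 ≤ t) :
    t * exp (-(l * t)) ≤ max 1 l⁻¹ * min 1 t := by
  rcases le_total t 1 with h | h
  · rw [min_eq_right h]
    have : exp (-(l * t)) ≤ 1 := exp_le_one_iff.2 (by nlinarith)
    nlinarith [le_max_left 1 l⁻¹]
  · rw [min_eq_left h, mul_one]
    have hlt : l * t * exp (-(l * t)) ≤ 1 := by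
      rw [exp_neg, ← div_eq_mul_inv, div_le_one (exp_pos _)]
      linarith [add_one_le_exp (l * t)]
    calc t * exp (-(l * t)) = l⁻¹ * (l * t * exp (-(l * t))) := by field_simp
      _ ≤ l⁻¹ * 1 := mul_le_mul_of_nonneg_left hlt (by positivity)
      _ ≤ max 1 l⁻¹ := by simp

def IsLevyMeasure (μ : Measure ℝ) : Prop :=
  ∫⁻ t in Ioi (0 : ℝ), ENNReal.ofReal (min 1 t) ∂μ < ⊤

noncomputable def levyH (μ : Measure ℝ) (l : ℝ) : ℝ := ∫ t in Ioi (0 : ℝ), kernelH (l * t) ∂μ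

lemma levyH_nonneg (μ : Measure ℝ) (l : ℝ) : 0 ≤ levyH μ l :=
  integral_nonneg fun _ => kernelH_nonneg _

namespace IsLevyMeasure

variable {μ : Measure ℝ}

lemma integrableOn_min_one (hμ : IsLevyMeasure μ) :
    IntegrableOn (fun t => min 1 t) (Ioi 0) μ :=
  ⟨(continuous_const.min continuous_id).aestronglyMeasurable,
    (hasFiniteIntegral_iff_ofReal (ae_restrict_of_forall_mem measurableSet_Ioi
      fun _ ht => le_min zero_le_one (le_of_lt ht))).2 hμ⟩

lemma integrableOn_of_abs_le (hμ : IsLevyMeasure μ) {s : Set ℝ} (hs : MeasurableSet s)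
    (hsub : s ⊆ Ioi 0) {f : ℝ → ℝ} (hf : Continuous f) (K : ℝ)
    (hbd : ∀ t ∈ s, |f t| ≤ K * min 1 t) : IntegrableOn f s μ :=
  ((hμ.integrableOn_min_one.mono_set hsub).const_mul K).mono' hf.aestronglyMeasurable
    (ae_restrict_of_forall_mem hs hbd)

lemma integrableOn_one (hμ : IsLevyMeasure μ) {c : ℝ} (hc : 0 < c) :
    IntegrableOn (fun _ => (1 : ℝ)) (Ioi c) μ := by
  refine hμ.integrableOn_of_abs_le measurableSet_Ioi (Ioi_subset_Ioi hc.le) continuous_const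
    (min 1 c)⁻¹ fun t ht => ?_
  rw [abs_one, inv_mul_eq_div, one_le_div (lt_min one_pos hc)]
  exact min_le_min_left 1 (le_of_lt ht)

lemma integrableOn_one_sub_exp (hμ : IsLevyMeasure μ) {l : ℝ} (hl : 0 ≤ l) :
    IntegrableOn (fun t => 1 - exp (-(l * t))) (Ioi 0) μ :=
  hμ.integrableOn_of_abs_le measurableSet_Ioi subset_rfl (by fun_prop) (max 1 l) fun t ht => by
    have hlt : 0 ≤ l * t := mul_nonneg hl (le_of_lt ht)
    rw [abs_of_nonneg (sub_nonneg.2 (exp_le_one_iff.2 (neg_nonpos.2 hlt)))]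
    exact one_sub_exp_neg_mul_le (le_of_lt ht)

lemma integrableOn_mul_exp (hμ : IsLevyMeasure μ) {l : ℝ} (hl : 0 < l) :
    IntegrableOn (fun t => t * exp (-(l * t))) (Ioi 0) μ :=
  hμ.integrableOn_of_abs_le measurableSet_Ioi subset_rfl (by fun_prop) (max 1 l⁻¹) fun t ht => by
    rw [abs_of_nonneg (mul_nonneg (le_of_lt ht) (exp_pos _).le)]
    exact mul_exp_neg_mul_le hl (le_of_lt ht)

lemma integrableOn_kernelH (hμ : IsLevyMeasure μ) {l : ℝ} (hl : 0 < l) :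
    IntegrableOn (fun t => kernelH (l * t)) (Ioi 0) μ :=
  ((hμ.integrableOn_one_sub_exp hl.le).sub ((hμ.integrableOn_mul_exp hl).const_mul l)).congr_fun
    (fun t _ => by simp only [Pi.sub_apply, kernelH]; ring) measurableSet_Ioi

lemma hasDerivAt_integral_one_sub_exp (hμ : IsLevyMeasure μ) {l : ℝ} (hl : 0 < l) :
    HasDerivAt (fun x => ∫ t in Ioi (0 : ℝ), (1 - exp (-(x * t))) ∂μ)
      (∫ t in Ioi (0 : ℝ), t * exp (-(l * t)) ∂μ) l := by
  have hderiv (t x : ℝ) : HasDerivAt (fun x => 1 - exp (-(x * t))) (t * exp (-(x * t))) x :=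
    have hlin : HasDerivAt (fun x => -(x * t)) (-t) x := (hasDerivAt_mul_const t).neg
    (hlin.exp.const_sub 1).congr_deriv (by ring)
  have hdom : ∀ᵐ t ∂μ.restrict (Ioi 0), ∀ x ∈ Ioi (l / 2),
      ‖t * exp (-(x * t))‖ ≤ t * exp (-(l / 2 * t)) := by
    refine ae_restrict_of_forall_mem measurableSet_Ioi fun t ht x hx => ?_
    have ht : 0 ≤ t := le_of_lt ht
    rw [Real.norm_eq_abs, abs_of_nonneg (mul_nonneg ht (exp_pos _).le)]
    exact mul_le_mul_of_nonneg_left (exp_le_exp.2 (by nlinarith [mem_Ioi.1 hx])) ht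
  exact (hasDerivAt_integral_of_dominated_loc_of_deriv_le (μ := μ.restrict (Ioi 0))
    (F := fun x t => 1 - exp (-(x * t))) (F' := fun x t => t * exp (-(x * t)))
    (Ioi_mem_nhds (half_lt_self hl))
    (Eventually.of_forall fun x => (by fun_prop : Continuous _).aestronglyMeasurable)
    (hμ.integrableOn_one_sub_exp hl.le) (by fun_prop : Continuous _).aestronglyMeasurable
    hdom (hμ.integrableOn_mul_exp (half_pos hl)) (Eventually.of_forall fun t x _ => hderiv t x)).2

lemma sub_mul_deriv_eq_levyH (hμ : IsLevyMeasure μ) {b : ℝ} {φ : ℝ → ℝ}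
    (hφ : ∀ l > 0, φ l = b * l + ∫ t in Ioi (0 : ℝ), (1 - exp (-(l * t))) ∂μ)
    {l : ℝ} (hl : 0 < l) : φ l - l * deriv φ l = levyH μ l := by
  have hφ' : HasDerivAt φ (b + ∫ t in Ioi (0 : ℝ), t * exp (-(l * t)) ∂μ) l :=
    ((hasDerivAt_id l).const_mul b |>.congr_deriv (mul_one b) |>.add
      (hμ.hasDerivAt_integral_one_sub_exp hl)).congr_of_eventuallyEq
      (eventually_of_mem (Ioi_mem_nhds hl) fun x hx => hφ x hx)
  have hsplit : levyH μ l = (∫ t in Ioi (0 : ℝ), (1 - exp (-(l * t))) ∂μ)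
      - ∫ t in Ioi (0 : ℝ), l * (t * exp (-(l * t))) ∂μ := by
    rw [levyH, ← integral_sub (hμ.integrableOn_one_sub_exp hl.le)
      ((hμ.integrableOn_mul_exp hl).const_mul l)]
    congr 1 with t
    simp only [kernelH]
    ring
  rw [hφ l hl, hφ'.deriv, hsplit, integral_const_mul]
  ring

lemma levyH_mul_le (hμ : IsLevyMeasure μ) {a l : ℝ} (ha : 0 < a) (hl : 0 < l) :
    levyH μ (a * l) ≤ exp 1 * a ^ 2 * levyH μ l + (μ (Ioi l⁻¹)).toReal := by
  have hc : 0 < l⁻¹ := inv_pos.2 hl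
  have hint := hμ.integrableOn_kernelH (mul_pos ha hl)
  have hint_l := hμ.integrableOn_kernelH hl
  have hsmall : ∫ t in Ioc 0 l⁻¹, kernelH (a * l * t) ∂μ ≤ exp 1 * a ^ 2 * levyH μ l :=
    calc ∫ t in Ioc 0 l⁻¹, kernelH (a * l * t) ∂μ
        ≤ ∫ t in Ioc 0 l⁻¹, exp 1 * a ^ 2 * kernelH (l * t) ∂μ := by
          refine setIntegral_mono_on (hint.mono_set Ioc_subset_Ioi_self)
            ((hint_l.mono_set Ioc_subset_Ioi_self).const_mul _) measurableSet_Ioc fun t ht => ?_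
          have hlt : l * t ≤ 1 := by
            rw [← mul_inv_cancel₀ hl.ne']
            exact mul_le_mul_of_nonneg_left ht.2 hl.le
          rw [mul_assoc]
          exact kernelH_mul_le ha.le (mul_pos hl ht.1).le hlt
      _ = exp 1 * a ^ 2 * ∫ t in Ioc 0 l⁻¹, kernelH (l * t) ∂μ := integral_const_mul _ _
      _ ≤ exp 1 * a ^ 2 * levyH μ l :=
          mul_le_mul_of_nonneg_left (setIntegral_mono_set hint_l
            (ae_of_all _ fun _ => kernelH_nonneg _) Ioc_subset_Ioi_self.eventuallyLE)
            (by positivity)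
  have hlarge : ∫ t in Ioi l⁻¹, kernelH (a * l * t) ∂μ ≤ (μ (Ioi l⁻¹)).toReal :=
    calc ∫ t in Ioi l⁻¹, kernelH (a * l * t) ∂μ ≤ ∫ _ in Ioi l⁻¹, (1 : ℝ) ∂μ :=
          setIntegral_mono_on (hint.mono_set (Ioi_subset_Ioi hc.le)) (hμ.integrableOn_one hc)
            measurableSet_Ioi fun t ht =>
              kernelH_le_one (mul_pos (mul_pos ha hl) (hc.trans ht)).le
      _ = (μ (Ioi l⁻¹)).toReal := by simp [measureReal_def]
  rw [levyH, ← Ioc_union_Ioi_eq_Ioi hc.le, setIntegral_union (Ioc_disjoint_Ioi le_rfl)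
    measurableSet_Ioi (hint.mono_set Ioc_subset_Ioi_self) (hint.mono_set (Ioi_subset_Ioi hc.le))]
  linarith

lemma sq_div_two_mul_levyH_le (hμ : IsLevyMeasure μ) {C δ M r : ℝ} (hC : 0 ≤ C) (hM : 0 < M)
    (hMδ : C * exp 1 * M ^ (2 - δ) ≤ 1 / 2) (hr : 0 < r)
    (hscal : levyH μ r⁻¹ ≤ C * M⁻¹ ^ δ * levyH μ (M * r⁻¹)) :
    M ^ 2 / 2 * levyH μ r⁻¹ ≤ (μ (Ioi r)).toReal := by
  have hA := hμ.levyH_mul_le hM (inv_pos.2 hr)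
  rw [inv_inv] at hA
  have hq : 0 ≤ M ^ (2 - δ) := (rpow_pos_of_pos hM _).le
  have hCq : C * M ^ (2 - δ) ≤ 1 := by
    nlinarith [add_one_le_exp 1, mul_nonneg hC hq]
  have hscal' : M ^ δ * levyH μ r⁻¹ ≤ C * levyH μ (M * r⁻¹) := by
    rw [inv_rpow hM.le] at hscal
    calc M ^ δ * levyH μ r⁻¹ ≤ M ^ δ * (C * (M ^ δ)⁻¹ * levyH μ (M * r⁻¹)) :=
          mul_le_mul_of_nonneg_left hscal (rpow_pos_of_pos hM δ).le
      _ = C * levyH μ (M * r⁻¹) := by field_simp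
  have hB := levyH_nonneg μ r⁻¹
  have hm : 0 ≤ (μ (Ioi r)).toReal := ENNReal.toReal_nonneg
  have habsorb : M ^ 2 * levyH μ r⁻¹ ≤ 1 / 2 * (M ^ 2 * levyH μ r⁻¹) + (μ (Ioi r)).toReal :=
    calc M ^ 2 * levyH μ r⁻¹ = M ^ (2 - δ) * (M ^ δ * levyH μ r⁻¹) := by
          rw [← mul_assoc, ← rpow_add hM, sub_add_cancel, rpow_two]
      _ ≤ M ^ (2 - δ) * (C * (exp 1 * M ^ 2 * levyH μ r⁻¹ + (μ (Ioi r)).toReal)) :=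
          mul_le_mul_of_nonneg_left (hscal'.trans (mul_le_mul_of_nonneg_left hA hC)) hq
      _ = C * exp 1 * M ^ (2 - δ) * (M ^ 2 * levyH μ r⁻¹)
            + C * M ^ (2 - δ) * (μ (Ioi r)).toReal := by ring
      _ ≤ 1 / 2 * (M ^ 2 * levyH μ r⁻¹) + 1 * (μ (Ioi r)).toReal :=
          add_le_add (mul_le_mul_of_nonneg_right hMδ (by positivity))
            (mul_le_mul_of_nonneg_right hCq hm)
      _ = 1 / 2 * (M ^ 2 * levyH μ r⁻¹) + (μ (Ioi r)).toReal := by ring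
  linarith

end IsLevyMeasure

theorem stmt10_general (μ : Measure ℝ)
    (hμ : ∫⁻ t in Ioi (0:ℝ), ENNReal.ofReal (min 1 t) ∂μ < ⊤)
    (b : ℝ)
    (φ H : ℝ → ℝ)
    (hφ : ∀ l > 0, φ l = b * l + ∫ t in Ioi (0:ℝ), (1 - exp (-(l * t))) ∂μ)
    (hH : ∀ l > 0, H l = φ l - l * deriv φ l)
    (CU δ lU : ℝ) (hCU : 0 < CU) (hδ2 : δ < 2)
    (hscal : ∀ l > lU, ∀ x ≥ 1, H (l * x) ≤ CU * x ^ δ * H l) :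
    ∃ M : ℝ, 0 < M ∧ M < 1 ∧
      ∀ r, 0 < r → r * lU < M → M ^ 2 / 2 * H r⁻¹ ≤ (μ (Ioi r)).toReal := by
  have hlevy : IsLevyMeasure μ := hμ
  have hHμ : ∀ l > 0, H l = levyH μ l := fun l hl =>
    (hH l hl).trans (hlevy.sub_mul_deriv_eq_levyH hφ hl)
  obtain ⟨M, hM0, hM1, hMδ⟩ :=
    exists_pos_lt_one_mul_rpow_le (CU * exp 1) (sub_pos.2 hδ2) one_half_pos
  refine ⟨M, hM0, hM1, fun r hr hrM => ?_⟩
  have hlU : lU < M * r⁻¹ := by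
    rw [← div_eq_mul_inv, lt_div_iff₀ hr]
    linarith
  have hscal_r := hscal _ hlU M⁻¹ ((one_le_inv₀ hM0).2 hM1.le)
  have hMr : M * r⁻¹ * M⁻¹ = r⁻¹ := by field_simp
  rw [hMr, hHμ _ (by positivity), hHμ _ (by positivity)] at hscal_r
  rw [hHμ _ (by positivity)]
  exact hlevy.sq_div_two_mul_levyH_le (by positivity) hM0 hMδ hr hscal_r

theorem stmt10 (μ : Measure ℝ)
    (hμ : ∫⁻ t in Ioi (0:ℝ), ENNReal.ofReal (min 1 t) ∂μ < ⊤)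
    (b : ℝ) (hb : 0 ≤ b)
    (φ H : ℝ → ℝ)
    (hφ : ∀ l > 0, φ l = b * l + ∫ t in Ioi (0:ℝ), (1 - exp (-(l * t))) ∂μ)
    (hH : ∀ l > 0, H l = φ l - l * deriv φ l)
    (CU δ lU : ℝ) (hCU : 0 < CU) (hδ0 : 0 < δ) (hδ2 : δ < 2) (hlU : 0 ≤ lU)
    (hscal : ∀ l > lU, ∀ x ≥ 1, H (l * x) ≤ CU * x ^ δ * H l) :
    ∃ M : ℝ, 0 < M ∧ M < 1 ∧
      ∀ r, 0 < r → r * lU < M → M ^ 2 / 2 * H r⁻¹ ≤ (μ (Ioi r)).toReal :=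
  stmt10_general μ hμ b φ H hφ hH CU δ lU hCU hδ2 hscal
end

section
/- Let S = (S_t) be a subordinator with Laplace exponent φ, i.e. E[e^{-λ S_t}] = e^{-tφ(λ)}. For any α, β > 0 with αβ > 1 there exist ρ ∈ (0,1) and τ > 0 such that for all t > 0, P(1/(α φ^{-1}(β t^{-1})) ≤ S_t ≤ 1/φ^{-1}(ρ t^{-1})) ≥ τ. -/
/-!
Both tails of `S t` are controlled by Markov's inequality at the level where `φ` is inverted.
With `λ = φ⁻¹(β/t)`, the bound `e^{-λ S_t} ≥ e^{-1/α}` on the lower tail gives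
`P(S_t < 1/(αλ)) ≤ e^{1/α - β}`, which is `< 1` because `αβ > 1`.
The monotonicity of `φ` keeps `E[e^{-l S_t}]` bounded as `l → ∞`, which forces `S_t ≥ 0` a.s.;
then with `μ = φ⁻¹(ρ/t)` the bound `1 - e^{-μ S_t} ≥ 1 - e^{-1}` on the upper tail gives
`P(S_t > 1/μ) ≤ (1 - e^{-ρ})/(1 - e^{-1}) ≤ ρ/(1 - e^{-1})`, which is as small as we like
for small `ρ`. Neither bound depends on `t`.
-/

open MeasureTheory Set Real Filter Topology

section ExponentialMarkov

variable {Ω : Type*} [MeasurableSpace Ω] {P : Measure Ω}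

theorem measureReal_le_exp_mul_integral_exp_neg [IsFiniteMeasure P] {Y : Ω → ℝ} {A : Set Ω}
    {a : ℝ} (hY : Integrable (fun ω => exp (-Y ω)) P) (hA : ∀ ω ∈ A, Y ω ≤ a) :
    P.real A ≤ exp a * ∫ ω, exp (-Y ω) ∂P := by
  have hmarkov := mul_meas_ge_le_integral_of_nonneg
    (Eventually.of_forall fun ω => (exp_pos (-Y ω)).le) hY (exp (-a))
  have hsub : P.real A ≤ P.real {ω | exp (-a) ≤ exp (-Y ω)} :=
    measureReal_mono fun ω hω => exp_le_exp.2 (neg_le_neg (hA ω hω))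
  calc P.real A = exp a * (exp (-a) * P.real A) := by
        rw [← mul_assoc, ← exp_add, add_neg_cancel, exp_zero, one_mul]
    _ ≤ exp a * ∫ ω, exp (-Y ω) ∂P := by
        gcongr
        exact (mul_le_mul_of_nonneg_left hsub (exp_pos _).le).trans hmarkov

theorem measureReal_le_one_sub_integral_exp_neg_div [IsProbabilityMeasure P] {Y : Ω → ℝ}
    {A : Set Ω} {a : ℝ} (ha : 0 < a) (hY0 : 0 ≤ᵐ[P] Y)
    (hY : Integrable (fun ω => exp (-Y ω)) P) (hA : ∀ ω ∈ A, a ≤ Y ω) :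
    P.real A ≤ (1 - ∫ ω, exp (-Y ω) ∂P) / (1 - exp (-a)) := by
  have hpos : 0 < 1 - exp (-a) := sub_pos.2 (exp_lt_one_iff.2 (neg_lt_zero.2 ha))
  have hf0 : 0 ≤ᵐ[P] fun ω => 1 - exp (-Y ω) :=
    hY0.mono fun ω h => sub_nonneg.2 (exp_le_one_iff.2 (neg_nonpos.2 h))
  have hmarkov := mul_meas_ge_le_integral_of_nonneg hf0 ((integrable_const 1).sub hY)
    (1 - exp (-a))
  rw [integral_sub (integrable_const 1) hY, integral_const, probReal_univ, one_smul] at hmarkov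
  have hsub : P.real A ≤ P.real {ω | 1 - exp (-a) ≤ 1 - exp (-Y ω)} :=
    measureReal_mono fun ω hω => sub_le_sub_left (exp_le_exp.2 (neg_le_neg (hA ω hω))) 1
  rw [le_div_iff₀' hpos]
  exact (mul_le_mul_of_nonneg_left hsub hpos.le).trans hmarkov

theorem ae_nonneg_of_integral_exp_neg_mul_le [IsFiniteMeasure P] {X : Ω → ℝ} {C : ℝ}
    (hint : ∀ l ≥ 1, Integrable (fun ω => exp (-(l * X ω))) P)
    (hle : ∀ l ≥ 1, ∫ ω, exp (-(l * X ω)) ∂P ≤ C) : 0 ≤ᵐ[P] X := by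
  have hneg : ∀ ε > 0, P {ω | X ω < -ε} = 0 := by
    intro ε hε
    have hbound : ∀ l ≥ 1, P.real {ω | X ω < -ε} ≤ exp (-(l * ε)) * C := fun l hl =>
      (measureReal_le_exp_mul_integral_exp_neg (a := -(l * ε)) (hint l hl)
        fun ω (hω : X ω < -ε) => by nlinarith).trans (by gcongr; exact hle l hl)
    have hlim : Tendsto (fun l => exp (-(l * ε)) * C) atTop (𝓝 0) := by
      simpa using (tendsto_exp_neg_atTop_nhds_zero.comp
        (tendsto_id.atTop_mul_const hε)).mul_const C
    rw [← measureReal_eq_zero_iff]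
    exact le_antisymm (ge_of_tendsto hlim ((eventually_ge_atTop 1).mono hbound))
      measureReal_nonneg
  have hn : ∀ n : ℕ, ∀ᵐ ω ∂P, -(1 / ((n : ℝ) + 1)) ≤ X ω := fun n => by
    rw [ae_iff]
    simpa only [not_le] using hneg _ (by positivity)
  filter_upwards [ae_all_iff.2 hn] with ω hω
  have hlim : Tendsto (fun n : ℕ => -(1 / ((n : ℝ) + 1))) atTop (𝓝 0) := by
    simpa using (tendsto_one_div_add_atTop_nhds_zero_nat (𝕜 := ℝ)).neg
  exact le_of_tendsto' hlim hω

theorem ae_nonneg_of_integral_exp_neg_mul_eq [IsFiniteMeasure P] {X : Ω → ℝ} {f : ℝ → ℝ}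
    (hf : MonotoneOn f (Ici 1)) (hX : ∀ l ≥ 1, ∫ ω, exp (-(l * X ω)) ∂P = exp (-f l)) :
    0 ≤ᵐ[P] X :=
  ae_nonneg_of_integral_exp_neg_mul_le (C := exp (-f 1))
    (fun l hl => Integrable.of_integral_ne_zero (hX l hl ▸ (exp_pos _).ne'))
    fun l hl => (hX l hl).le.trans (exp_le_exp.2 (neg_le_neg (hf self_mem_Ici hl hl)))

theorem one_sub_add_le_measureReal [IsProbabilityMeasure P] {A B C : Set Ω}
    (h : Aᶜ ⊆ B ∪ C) : 1 - (P.real B + P.real C) ≤ P.real A := by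
  have : 1 ≤ P.real A + (P.real B + P.real C) :=
    calc 1 = P.real (A ∪ Aᶜ) := by simp
      _ ≤ P.real A + P.real Aᶜ := measureReal_union_le _ _
      _ ≤ P.real A + (P.real B + P.real C) := by
          gcongr
          exact (measureReal_mono h).trans (measureReal_union_le _ _)
  linarith

theorem measureReal_lt_one_div_mul_le [IsFiniteMeasure P] {X : Ω → ℝ} {l a b : ℝ}
    (hl : 0 < l) (ha : 0 < a) (hX : ∫ ω, exp (-(l * X ω)) ∂P = exp (-b)) :
    P.real {ω | X ω < 1 / (a * l)} ≤ exp (1 / a - b) := by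
  have h := measureReal_le_exp_mul_integral_exp_neg (a := 1 / a)
    (Integrable.of_integral_ne_zero (hX ▸ (exp_pos _).ne'))
    fun ω (hω : X ω < 1 / (a * l)) => by
      rw [lt_div_iff₀ (by positivity)] at hω
      rw [le_div_iff₀ ha]
      linarith
  rwa [hX, ← exp_add, ← sub_eq_add_neg] at h

theorem measureReal_one_div_lt_le [IsProbabilityMeasure P] {X : Ω → ℝ} {l b : ℝ}
    (hl : 0 < l) (hX0 : 0 ≤ᵐ[P] X) (hX : ∫ ω, exp (-(l * X ω)) ∂P = exp (-b)) :
    P.real {ω | 1 / l < X ω} ≤ b / (1 - exp (-1)) := by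
  have h := measureReal_le_one_sub_integral_exp_neg_div one_pos
    (hX0.mono fun ω hω => mul_nonneg hl.le hω)
    (Integrable.of_integral_ne_zero (hX ▸ (exp_pos _).ne'))
    fun ω (hω : 1 / l < X ω) => by
      rw [div_lt_iff₀ hl] at hω
      linarith
  have he : 0 < 1 - exp (-1) := sub_pos.2 (exp_lt_one_iff.2 (by norm_num))
  rw [hX] at h
  exact h.trans (by gcongr; linarith [add_one_le_exp (-b)])

end ExponentialMarkov

theorem stmt11_general {Ω : Type*} [MeasurableSpace Ω] (P : Measure Ω) [IsProbabilityMeasure P]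
    (S : ℝ → Ω → ℝ)
    (φ φinv : ℝ → ℝ)
    (hmono : StrictMonoOn φ (Ioi 0))
    (hinv : ∀ y > 0, 0 < φinv y ∧ φ (φinv y) = y)
    (hLap : ∀ t > 0, ∀ l > 0, (∫ ω, exp (-(l * S t ω)) ∂P) = exp (-(t * φ l))) :
    ∀ α β : ℝ, 0 < α → 0 < β → 1 < α * β →
      ∃ ρ : ℝ, ρ ∈ Ioo (0:ℝ) 1 ∧ ∃ τ > 0, ∀ t > 0,
        ENNReal.ofReal τ ≤
          P {ω | 1 / (α * φinv (β / t)) ≤ S t ω ∧ S t ω ≤ 1 / φinv (ρ / t)} := by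
  intro α β hα hβ hαβ
  set δ := 1 - exp (1 / α - β) with hδ_def
  have hδ0 : 0 < δ := sub_pos.2 (exp_lt_one_iff.2 (by rw [sub_neg, div_lt_iff₀ hα]; linarith))
  have hδ1 : δ < 1 := sub_lt_self 1 (exp_pos _)
  have he0 : 0 < 1 - exp (-1) := sub_pos.2 (exp_lt_one_iff.2 (by norm_num))
  have he1 : 1 - exp (-1) < 1 := sub_lt_self 1 (exp_pos _)
  set ρ := (1 - exp (-1)) * δ / 2 with hρ_def
  refine ⟨ρ, ⟨by positivity, by nlinarith⟩, δ / 2, half_pos hδ0, fun t ht => ?_⟩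
  have hS0 : 0 ≤ᵐ[P] S t :=
    ae_nonneg_of_integral_exp_neg_mul_eq (f := fun l => t * φ l)
      (fun x hx y hy hxy => mul_le_mul_of_nonneg_left
        (hmono.monotoneOn (mem_Ioi.2 (one_pos.trans_le hx)) (mem_Ioi.2 (one_pos.trans_le hy))
          hxy) ht.le)
      fun l hl => hLap t ht l (one_pos.trans_le hl)
  obtain ⟨hinvβ_pos, hφβ⟩ := hinv (β / t) (by positivity)
  obtain ⟨hinvρ_pos, hφρ⟩ := hinv (ρ / t) (by positivity)
  have hlower := measureReal_lt_one_div_mul_le hinvβ_pos hα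
    (by rw [hLap t ht _ hinvβ_pos, hφβ, mul_div_cancel₀ _ ht.ne'])
  have hupper := measureReal_one_div_lt_le hinvρ_pos hS0
    (by rw [hLap t ht _ hinvρ_pos, hφρ, mul_div_cancel₀ _ ht.ne'])
  have hρδ : ρ / (1 - exp (-1)) = δ / 2 := by rw [hρ_def]; field_simp
  rw [ENNReal.ofReal_le_iff_le_toReal (measure_ne_top _ _)]
  calc δ / 2 = 1 - (exp (1 / α - β) + ρ / (1 - exp (-1))) := by rw [hρδ, hδ_def]; ring
    _ ≤ 1 - (P.real {ω | S t ω < 1 / (α * φinv (β / t))} +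
          P.real {ω | 1 / φinv (ρ / t) < S t ω}) := by linarith
    _ ≤ _ := one_sub_add_le_measureReal fun ω hω => by
          simpa only [mem_compl_iff, mem_ofPred_eq, not_and_or, not_le, mem_union] using hω

theorem stmt11 {Ω : Type*} [MeasurableSpace Ω] (P : Measure Ω) [IsProbabilityMeasure P]
    (S : ℝ → Ω → ℝ) (hSmeas : ∀ t, Measurable (S t))
    (φ φinv : ℝ → ℝ)
    (hmono : StrictMonoOn φ (Ioi 0))
    (hinv : ∀ y > 0, 0 < φinv y ∧ φ (φinv y) = y)
    (hLap : ∀ t > 0, ∀ l > 0, (∫ ω, exp (-(l * S t ω)) ∂P) = exp (-(t * φ l))) :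
    ∀ α β : ℝ, 0 < α → 0 < β → 1 < α * β →
      ∃ ρ : ℝ, ρ ∈ Ioo (0:ℝ) 1 ∧ ∃ τ > 0, ∀ t > 0,
        ENNReal.ofReal τ ≤
          P {ω | 1 / (α * φinv (β / t)) ≤ S t ω ∧ S t ω ≤ 1 / φinv (ρ / t)} :=
  stmt11_general P S φ φinv hmono hinv hLap
end
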